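/- arXiv:math/0602134 — 3 statements merged into one kernel-verified Lean document; each statement's English description precedes it below -/
import Mathlib

section
/- Let X and Y be Polish spaces, c : X × Y → [0,∞] lower semicontinuous, μ a probability measure on X and ν a probability measure on Y. Suppose that for every optimal coupling γ of μ and ν for the cost c (i.e., every γ with marginals μ, ν minimizing ∫ c dγ) there exists a measurable map T_γ : X → Y such that the support of γ is contained in the graph {(x, T_γ(x)) : x ∈ supp μ}. Then the optimal coupling γ is unique, and there is a unique (μ-a.e.) measurable map T with γ = (Id × T)_* μ. -/
/-!
Couplings of `μ` and `ν` form a tight, hence (Prokhorov) compact, set of probability measures, on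
which `γ ↦ ∫ c dγ` is lower semicontinuous: by the layer-cake formula it is an integral of the
measures of the open superlevel sets of `c`, and Portmanteau and Fatou apply. So an optimal
coupling exists. A coupling concentrated on the graph of `T` is `(id × T)_* μ`. If `γ₁` and `γ₂`
are optimal, so is `(γ₁ + γ₂) / 2`; it is concentrated on the graph of some `T`, hence so are `γ₁`
and `γ₂`, and both equal `(id × T)_* μ`.
-/

open MeasureTheory ENNReal

noncomputable section

def IsCoupling {X Y : Type*} [MeasurableSpace X] [MeasurableSpace Y]
    (μ : Measure X) (ν : Measure Y) (γ : Measure (X × Y)) : Prop :=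
  γ.map Prod.fst = μ ∧ γ.map Prod.snd = ν

noncomputable def MKCost {X Y : Type*} [MeasurableSpace X] [MeasurableSpace Y]
    (c : X × Y → ℝ≥0∞) (μ : Measure X) (ν : Measure Y) : ℝ≥0∞ :=
  ⨅ γ ∈ {γ : Measure (X × Y) | IsCoupling μ ν γ}, ∫⁻ p, c p ∂γ

def IsOptimalCoupling {X Y : Type*} [MeasurableSpace X] [MeasurableSpace Y]
    (c : X × Y → ℝ≥0∞) (μ : Measure X) (ν : Measure Y) (γ : Measure (X × Y)) : Prop :=
  IsCoupling μ ν γ ∧ ∫⁻ p, c p ∂γ = MKCost c μ ν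

/-- The topological support of a measure: the set of points all of whose open
neighbourhoods have positive measure. -/
def msupport {X : Type*} [MeasurableSpace X] [TopologicalSpace X] (μ : Measure X) : Set X :=
  {x | ∀ U : Set X, IsOpen U → x ∈ U → μ U ≠ 0}

open Filter Set Topology

lemma volume_restrict_Ioi_setOf_ofReal_lt (a : ℝ≥0∞) :
    volume.restrict (Ioi (0 : ℝ)) {t | ENNReal.ofReal t < a} = a := by
  rw [Measure.restrict_apply (measurableSet_lt measurable_ofReal measurable_const)]
  rcases eq_or_ne a ⊤ with rfl | ha
  · simp
  · have : {t | ENNReal.ofReal t < a} ∩ Ioi 0 = Ioo 0 a.toReal := by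
      ext t
      simp only [mem_inter_iff, mem_ofPred_eq, mem_Ioi, mem_Ioo]
      constructor
      · rintro ⟨h, ht⟩
        exact ⟨ht, (ofReal_lt_iff_lt_toReal ht.le ha).1 h⟩
      · rintro ⟨ht, h⟩
        exact ⟨(ofReal_lt_iff_lt_toReal ht.le ha).2 h, ht⟩
    rw [this, Real.volume_Ioo, sub_zero, ofReal_toReal ha]

theorem lintegral_eq_lintegral_meas_ofReal_lt {Z : Type*} [MeasurableSpace Z]
    (ρ : Measure Z) [SFinite ρ] {f : Z → ℝ≥0∞} (hf : Measurable f) :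
    ∫⁻ z, f z ∂ρ = ∫⁻ t in Ioi (0 : ℝ), ρ {z | ENNReal.ofReal t < f z} := by
  have hE : MeasurableSet {p : Z × ℝ | ENNReal.ofReal p.2 < f p.1} :=
    measurableSet_lt (measurable_ofReal.comp measurable_snd) (hf.comp measurable_fst)
  calc ∫⁻ z, f z ∂ρ
      = ∫⁻ z, volume.restrict (Ioi (0 : ℝ)) {t | ENNReal.ofReal t < f z} ∂ρ := by
        simp only [volume_restrict_Ioi_setOf_ofReal_lt]
    _ = (ρ.prod (volume.restrict (Ioi 0))) {p : Z × ℝ | ENNReal.ofReal p.2 < f p.1} :=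
        (Measure.prod_apply hE).symm
    _ = ∫⁻ t in Ioi (0 : ℝ), ρ {z | ENNReal.ofReal t < f z} := Measure.prod_apply_symm hE

namespace MeasureTheory.ProbabilityMeasure

theorem lintegral_le_liminf_lintegral_of_tendsto {Ω ι : Type*}
    [MeasurableSpace Ω] [TopologicalSpace Ω] [OpensMeasurableSpace Ω] [HasOuterApproxClosed Ω]
    {L : Filter ι} [L.IsCountablyGenerated]
    {f : Ω → ℝ≥0∞} (hf : LowerSemicontinuous f) {μ : ProbabilityMeasure Ω}
    {μs : ι → ProbabilityMeasure Ω} (hμs : Tendsto μs L (𝓝 μ)) :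
    ∫⁻ x, f x ∂μ ≤ L.liminf fun i => ∫⁻ x, f x ∂(μs i) := by
  simp only [lintegral_eq_lintegral_meas_ofReal_lt _ hf.measurable]
  calc ∫⁻ t in Ioi (0 : ℝ), (μ : Measure Ω) {x | ENNReal.ofReal t < f x}
      ≤ ∫⁻ t in Ioi (0 : ℝ), L.liminf fun i => (μs i : Measure Ω) {x | ENNReal.ofReal t < f x} :=
        lintegral_mono fun t =>
          le_liminf_measure_open_of_tendsto hμs (hf.isOpen_preimage _)
    _ ≤ _ := lintegral_liminf_le' fun i => Measurable.aemeasurable <|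
          Antitone.measurable (f := fun t => (μs i : Measure Ω) {x | ENNReal.ofReal t < f x})
            fun s t hst => measure_mono fun x hx => (ofReal_le_ofReal hst).trans_lt hx

theorem lowerSemicontinuous_lintegral {Ω : Type*}
    [MeasurableSpace Ω] [TopologicalSpace Ω] [OpensMeasurableSpace Ω] [HasOuterApproxClosed Ω]
    [FirstCountableTopology (ProbabilityMeasure Ω)]
    {f : Ω → ℝ≥0∞} (hf : LowerSemicontinuous f) :
    LowerSemicontinuous fun μ : ProbabilityMeasure Ω => ∫⁻ x, f x ∂μ := by
  intro μ a ha
  by_contra h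
  obtain ⟨μs, hμs, hle⟩ := exists_seq_forall_of_frequently (not_eventually.1 h)
  refine (lintegral_le_liminf_lintegral_of_tendsto hf hμs).not_gt ?_
  exact lt_of_le_of_lt ((liminf_le_liminf (Eventually.of_forall fun n => not_lt.1 (hle n))).trans
    (liminf_const a).le) ha

end MeasureTheory.ProbabilityMeasure

section Couplings

variable {X Y : Type*} [MeasurableSpace X] [MeasurableSpace Y]

lemma IsCoupling.isProbabilityMeasure {μ : Measure X} {ν : Measure Y} [IsProbabilityMeasure μ]
    {γ : Measure (X × Y)} (hγ : IsCoupling μ ν γ) : IsProbabilityMeasure γ := by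
  rw [← Measure.isProbabilityMeasure_map_iff measurable_fst.aemeasurable, hγ.1]
  infer_instance

lemma isCoupling_prod (μ : Measure X) (ν : Measure Y) [IsProbabilityMeasure μ]
    [IsProbabilityMeasure ν] : IsCoupling μ ν (μ.prod ν) := by
  constructor <;> simp [Measure.map_fst_prod, Measure.map_snd_prod]

lemma isOptimalCoupling_iff_forall_le {c : X × Y → ℝ≥0∞} {μ : Measure X} {ν : Measure Y}
    {γ : Measure (X × Y)} :
    IsOptimalCoupling c μ ν γ ↔
      IsCoupling μ ν γ ∧ ∀ γ', IsCoupling μ ν γ' → ∫⁻ p, c p ∂γ ≤ ∫⁻ p, c p ∂γ' := by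
  refine and_congr_right fun hγ => ⟨fun h γ' hγ' => h ▸ iInf₂_le γ' hγ', fun h => ?_⟩
  exact le_antisymm (le_iInf₂ h) (iInf₂_le γ hγ)

lemma IsCoupling.smul_add_smul {μ : Measure X} {ν : Measure Y} {γ₁ γ₂ : Measure (X × Y)}
    (h₁ : IsCoupling μ ν γ₁) (h₂ : IsCoupling μ ν γ₂) {a b : ℝ≥0∞} (hab : a + b = 1) :
    IsCoupling μ ν (a • γ₁ + b • γ₂) := by
  constructor
  · rw [Measure.map_add _ _ measurable_fst, Measure.map_smul, Measure.map_smul, h₁.1, h₂.1,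
      ← add_smul, hab, one_smul]
  · rw [Measure.map_add _ _ measurable_snd, Measure.map_smul, Measure.map_smul, h₁.2, h₂.2,
      ← add_smul, hab, one_smul]

lemma IsOptimalCoupling.smul_add_smul {c : X × Y → ℝ≥0∞} {μ : Measure X} {ν : Measure Y}
    {γ₁ γ₂ : Measure (X × Y)} (h₁ : IsOptimalCoupling c μ ν γ₁) (h₂ : IsOptimalCoupling c μ ν γ₂)
    {a b : ℝ≥0∞} (hab : a + b = 1) : IsOptimalCoupling c μ ν (a • γ₁ + b • γ₂) := by
  refine ⟨h₁.1.smul_add_smul h₂.1 hab, ?_⟩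
  rw [lintegral_add_measure, lintegral_smul_measure, lintegral_smul_measure, h₁.2, h₂.2,
    smul_eq_mul, smul_eq_mul, ← add_mul, hab, one_mul]

variable [TopologicalSpace X] [PolishSpace X] [BorelSpace X]
  [TopologicalSpace Y] [PolishSpace Y] [BorelSpace Y]

lemma isTightMeasureSet_setOf_isCoupling (μ : Measure X) (ν : Measure Y) [IsFiniteMeasure μ]
    [IsFiniteMeasure ν] : IsTightMeasureSet {γ : Measure (X × Y) | IsCoupling μ ν γ} := by
  refine .prodMk ((isTightMeasureSet_singleton (μ := μ)).subset ?_)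
    ((isTightMeasureSet_singleton (μ := ν)).subset ?_)
  · rintro _ ⟨γ, hγ, rfl⟩
    exact hγ.1
  · rintro _ ⟨γ, hγ, rfl⟩
    exact hγ.2

lemma isClosed_setOf_isCoupling (μ : Measure X) (ν : Measure Y) :
    IsClosed {γ : ProbabilityMeasure (X × Y) | IsCoupling μ ν γ} := by
  have hfst := IsClosed.preimage (ProbabilityMeasure.continuous_map (Ω := X × Y) continuous_fst)
    (Set.Subsingleton.isClosed (s := {m : ProbabilityMeasure X | (m : Measure X) = μ})
      fun m hm m' hm' => Subtype.ext (hm.trans hm'.symm))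
  have hsnd := IsClosed.preimage (ProbabilityMeasure.continuous_map (Ω := X × Y) continuous_snd)
    (Set.Subsingleton.isClosed (s := {m : ProbabilityMeasure Y | (m : Measure Y) = ν})
      fun m hm m' hm' => Subtype.ext (hm.trans hm'.symm))
  convert hfst.inter hsnd using 1
  ext γ
  simp [IsCoupling]

lemma isCompact_setOf_isCoupling (μ : Measure X) (ν : Measure Y) [IsFiniteMeasure μ]
    [IsFiniteMeasure ν] : IsCompact {γ : ProbabilityMeasure (X × Y) | IsCoupling μ ν γ} := by
  have hcl := isClosed_setOf_isCoupling (X := X) (Y := Y) μ ν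
  rw [← hcl.closure_eq]
  refine isCompact_closure_of_isTightMeasureSet ((isTightMeasureSet_setOf_isCoupling μ ν).subset ?_)
  rintro _ ⟨γ, hγ, rfl⟩
  exact hγ

theorem exists_isOptimalCoupling {c : X × Y → ℝ≥0∞} (hc : LowerSemicontinuous c)
    (μ : Measure X) (ν : Measure Y) [IsProbabilityMeasure μ] [IsProbabilityMeasure ν] :
    ∃ γ, IsOptimalCoupling c μ ν γ := by
  obtain ⟨γ, hγ, hmin⟩ :=
    ((ProbabilityMeasure.lowerSemicontinuous_lintegral hc).lowerSemicontinuousOn _).exists_isMinOn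
      ⟨⟨μ.prod ν, inferInstance⟩, isCoupling_prod μ ν⟩ (isCompact_setOf_isCoupling μ ν)
  refine ⟨γ, isOptimalCoupling_iff_forall_le.2 ⟨hγ, fun γ' hγ' => ?_⟩⟩
  exact hmin (a := ⟨γ', hγ'.isProbabilityMeasure⟩) hγ'

end Couplings

lemma msupport_eq_support {Z : Type*} [MeasurableSpace Z] [TopologicalSpace Z] (ρ : Measure Z) :
    msupport ρ = ρ.support := by
  simp only [msupport, Measure.support_eq_forall_isOpen, pos_iff_ne_zero]
  ext z
  exact ⟨fun h U hzU hU => h U hU hzU, fun h U hU hzU => h U hzU hU⟩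

lemma ae_mem_msupport {Z : Type*} [MeasurableSpace Z] [TopologicalSpace Z]
    [HereditarilyLindelofSpace Z] (ρ : Measure Z) : ∀ᵐ z ∂ρ, z ∈ msupport ρ :=
  msupport_eq_support ρ ▸ Measure.support_mem_ae

section Graph

variable {X Y : Type*} [MeasurableSpace X] [MeasurableSpace Y]

lemma ae_snd_eq_of_msupport_subset_graph [TopologicalSpace X] [TopologicalSpace Y]
    [HereditarilyLindelofSpace (X × Y)] {μ : Measure X} {γ : Measure (X × Y)} {T : X → Y}
    (h : msupport γ ⊆ {p : X × Y | ∃ x ∈ msupport μ, p = (x, T x)}) :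
    ∀ᵐ p ∂γ, p.2 = T p.1 := by
  filter_upwards [ae_mem_msupport γ] with p hp
  obtain ⟨x, -, rfl⟩ := h hp
  rfl

lemma eq_map_prodMk_of_ae_snd_eq {μ : Measure X} {γ : Measure (X × Y)}
    (hfst : γ.map Prod.fst = μ) {T : X → Y} (hT : Measurable T) (hγ : ∀ᵐ p ∂γ, p.2 = T p.1) :
    γ = μ.map (fun x => (x, T x)) := by
  have hpair : Measurable fun x => (x, T x) := by fun_prop
  have hid : (fun p : X × Y => (p.1, T p.1)) =ᵐ[γ] id := hγ.mono fun p hp => Prod.ext rfl hp.symm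
  calc γ = γ.map (fun p => (p.1, T p.1)) := by rw [Measure.map_congr hid, Measure.map_id]
    _ = μ.map (fun x => (x, T x)) := by rw [← hfst, Measure.map_map hpair measurable_fst]; rfl

lemma ae_eq_of_map_prodMk_eq [MeasurableEq Y] {μ : Measure X} {T T' : X → Y}
    (hT : Measurable T) (hT' : Measurable T')
    (h : μ.map (fun x => (x, T' x)) = μ.map (fun x => (x, T x))) : T' =ᵐ[μ] T := by
  have hgraph : MeasurableSet {p : X × Y | p.2 = T p.1} :=
    measurableSet_eq_fun measurable_snd (hT.comp measurable_fst)
  have hpair : Measurable fun x => (x, T x) := by fun_prop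
  have hpair' : Measurable fun x => (x, T' x) := by fun_prop
  have hT_graph : ∀ᵐ p ∂μ.map (fun x => (x, T x)), p.2 = T p.1 :=
    (ae_map_iff hpair.aemeasurable hgraph).2 (ae_of_all _ fun _ => rfl)
  rwa [← h, ae_map_iff hpair'.aemeasurable hgraph] at hT_graph

end Graph

/-- If every optimal coupling of `μ` and `ν` for the l.s.c. cost `c` is supported by the graph
of a measurable map over the support of `μ`, then there is a unique optimal coupling `γ`,
and a (μ-a.e.) unique measurable map `T` with `γ = (Id × T)_* μ`. -/
theorem unique_optimal_coupling_of_graph_support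
    {X Y : Type*} [MeasurableSpace X] [TopologicalSpace X] [PolishSpace X] [BorelSpace X]
    [MeasurableSpace Y] [TopologicalSpace Y] [PolishSpace Y] [BorelSpace Y]
    (c : X × Y → ℝ≥0∞) (hc : LowerSemicontinuous c)
    (μ : Measure X) (ν : Measure Y)
    [IsProbabilityMeasure μ] [IsProbabilityMeasure ν]
    (hgraph : ∀ γ : Measure (X × Y), IsOptimalCoupling c μ ν γ →
      ∃ T : X → Y, Measurable T ∧
        msupport γ ⊆ {p : X × Y | ∃ x ∈ msupport μ, p = (x, T x)}) :
    ∃ (γ : Measure (X × Y)) (T : X → Y),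
      IsOptimalCoupling c μ ν γ ∧ Measurable T ∧
      γ = μ.map (fun x => (x, T x)) ∧
      (∀ γ' : Measure (X × Y), IsOptimalCoupling c μ ν γ' → γ' = γ) ∧
      (∀ T' : X → Y, Measurable T' → γ = μ.map (fun x => (x, T' x)) → T' =ᵐ[μ] T) := by
  have graph_ae : ∀ γ, IsOptimalCoupling c μ ν γ →
      ∃ T : X → Y, Measurable T ∧ ∀ᵐ p ∂γ, p.2 = T p.1 := fun γ hγ =>
    (hgraph γ hγ).imp fun _ ⟨hT, hsupp⟩ => ⟨hT, ae_snd_eq_of_msupport_subset_graph hsupp⟩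
  obtain ⟨γ, hγ⟩ := exists_isOptimalCoupling hc μ ν
  obtain ⟨T, hT, hγT⟩ := graph_ae γ hγ
  have hγ_eq := eq_map_prodMk_of_ae_snd_eq hγ.1.1 hT hγT
  refine ⟨γ, T, hγ, hT, hγ_eq, fun γ' hγ' => ?_,
    fun T' hT' hγT' => ae_eq_of_map_prodMk_eq hT hT' (hγT'.symm.trans hγ_eq)⟩
  obtain ⟨S, hS, hmid⟩ := graph_ae _ (hγ'.smul_add_smul hγ inv_two_add_inv_two)
  have half_ne_zero : (2⁻¹ : ℝ≥0∞) ≠ 0 := by simp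
  rw [eq_map_prodMk_of_ae_snd_eq hγ'.1.1 hS
      (((Measure.absolutelyContinuous_smul half_ne_zero).add_right _).ae_le hmid),
    eq_map_prodMk_of_ae_snd_eq hγ.1.1 hS
      (((Measure.absolutelyContinuous_smul half_ne_zero).add_right' _).ae_le hmid)]
end
end

section
/- Let γ₀ be a probability measure on X × Y supported on the graph of a measurable map T₀ : X → Y (i.e., γ₀ = (Id × T₀)_* μ where μ is its first marginal). If γ is a probability measure on X × Y absolutely continuous with respect to γ₀, with density L, having the same first marginal μ, then L(x, T₀(x)) = 1 for μ-almost every x, and hence γ = γ₀. -/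
open MeasureTheory ENNReal

noncomputable section

/-- If `γ₀ = (Id × T₀)_* μ` is carried by the graph of a measurable map `T₀`, and `γ` is
absolutely continuous with respect to `γ₀` with density `L` and has the same first marginal
`μ`, then `L(x, T₀ x) = 1` for `μ`-a.e. `x`, and `γ = γ₀`. -/
theorem density_one_on_graph
    {X Y : Type*} [MeasurableSpace X] [TopologicalSpace X] [PolishSpace X] [BorelSpace X]
    [MeasurableSpace Y] [TopologicalSpace Y] [PolishSpace Y] [BorelSpace Y]
    (μ : Measure X) [IsProbabilityMeasure μ]
    (T₀ : X → Y) (hT₀ : Measurable T₀)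
    (γ₀ γ : Measure (X × Y)) [IsProbabilityMeasure γ]
    (hγ₀ : γ₀ = μ.map (fun x => (x, T₀ x)))
    (L : X × Y → ℝ≥0∞) (hL : Measurable L)
    (hγ : γ = γ₀.withDensity L)
    (hmarg : γ.map Prod.fst = μ) :
    (∀ᵐ x ∂μ, L (x, T₀ x) = 1) ∧ γ = γ₀ := by
  have hg : Measurable (fun x : X => (x, T₀ x)) := measurable_id.prodMk hT₀
  set f : X → ℝ≥0∞ := fun x => L (x, T₀ x) with hf_def
  have hf : Measurable f := hL.comp hg
  -- Step 1: μ.withDensity f = μ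
  have key : μ.withDensity f = μ := by
    have : μ.withDensity f = γ.map Prod.fst := by
      ext s hs
      rw [Measure.map_apply measurable_fst hs, hγ, hγ₀,
        withDensity_apply _ (measurable_fst hs),
        setLIntegral_map (measurable_fst hs) hL hg,
        withDensity_apply _ hs]
      rfl
    rw [this, hmarg]
  have hae : ∀ᵐ x ∂μ, f x = 1 := by
    have h1 : μ.withDensity f = μ.withDensity 1 := by rw [key, withDensity_one]
    exact (withDensity_eq_iff_of_sigmaFinite hf.aemeasurable aemeasurable_const).mp h1
  refine ⟨hae, ?_⟩
  -- Step 2: γ = γ₀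
  have hmap : γ₀.withDensity L = (μ.withDensity f).map (fun x : X => (x, T₀ x)) := by
    ext s hs
    rw [hγ₀, withDensity_apply _ hs, setLIntegral_map hs hL hg,
      Measure.map_apply hg hs, withDensity_apply _ (hg hs)]
  rw [hγ, hmap, key, hγ₀]

end
end

section
/- Let μ be a regular probability measure on Γ_Λ (Λ compact) and ν a probability measure on Γ_X with μ(η(Λ)=n) = ν(ω(X)=n) for all n ≥ 0, and suppose Σ_{n≥1} T_c(μ_n, ν_n)² · μ(η(Λ)=n) < ∞, where μ_n = μ(· | η(Λ)=n), ν_n = ν(· | ω(X)=n). Then the Monge–Kantorovitch cost for the configuration cost c satisfies T_c(μ,ν)² = Σ_{n≥1} T_c(μ_n, ν_n)² μ(η(Λ)=n). -/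
open MeasureTheory ENNReal ProbabilityTheory

noncomputable section

variable {k : ℕ}

def IsConfiguration {X : Type*} [MeasurableSpace X] (η : Measure X) : Prop :=
  ∃ D : Set X, D.Countable ∧ η = Measure.sum (fun x : D => Measure.dirac (x : X))

noncomputable def configCost
    (η₁ η₂ : Measure (EuclideanSpace ℝ (Fin k))) : ℝ≥0∞ :=
  ⨅ β ∈ {β : Measure (EuclideanSpace ℝ (Fin k) × EuclideanSpace ℝ (Fin k)) |
      β.map Prod.fst = η₁ ∧ β.map Prod.snd = η₂ ∧ IsConfiguration β},
    ∫⁻ p, ENNReal.ofReal (‖p.1 - p.2‖ ^ 2 / 2) ∂β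

/-- The set of configurations with exactly `n` points. -/
def nPoints (k n : ℕ) : Set (Measure (EuclideanSpace ℝ (Fin k))) :=
  {η | η Set.univ = (n : ℝ≥0∞)}

/-- `μ` is regular: for each `n`, the conditional law given `n` points is the image under
`(x₁,…,xₙ) ↦ Σᵢ ε_{xᵢ}` of a symmetric measure on `n`-tuples which is absolutely continuous
with respect to Lebesgue measure. -/
def IsRegularConfigMeasure (μ : Measure (Measure (EuclideanSpace ℝ (Fin k)))) : Prop :=
  ∀ n : ℕ, 1 ≤ n → μ (nPoints k n) ≠ 0 →
    ∃ m : Measure (Fin n → EuclideanSpace ℝ (Fin k)),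
      m ≪ volume ∧ (∀ σ : Equiv.Perm (Fin n), m.map (fun x i => x (σ i)) = m) ∧
      μ[|nPoints k n] = m.map (fun x => ∑ i, Measure.dirac (x i))

/-!
A coupling of finite cost can only pair configurations with the same number of points, so it
restricts to couplings of the conditional laws `μₙ`, `νₙ` weighted by `μ(η(Λ) = n)`: this gives
`≥`. Conversely, near-optimal couplings of the pairs `(μₙ, νₙ)`, weighted and summed, glue into a
coupling of `μ` and `ν`: this gives `≤`. The `n = 0` term vanishes because the empty
configuration is transported to itself at no cost.
-/

open Set Function

lemma measure_eq_zero_of_lintegral_ne_top {α : Type*} [MeasurableSpace α] {μ : Measure α}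
    {f : α → ℝ≥0∞} {s : Set α} (hs : MeasurableSet s) (hf : ∀ x ∈ s, f x = ⊤)
    (h : ∫⁻ x, f x ∂μ ≠ ⊤) : μ s = 0 := by
  have : ⊤ * μ s ≤ ∫⁻ x, f x ∂μ :=
    calc ⊤ * μ s = ∫⁻ _ in s, ⊤ ∂μ := (setLIntegral_const s ⊤).symm
      _ = ∫⁻ x in s, f x ∂μ := setLIntegral_congr_fun hs fun x hx => (hf x hx).symm
      _ ≤ ∫⁻ x, f x ∂μ := setLIntegral_le_lintegral s f
  by_contra hμ
  exact h (top_le_iff.1 (ENNReal.top_mul hμ ▸ this))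

lemma measure_smul_cond {α : Type*} [MeasurableSpace α] (μ : Measure α) {s : Set α}
    (hs : μ s ≠ ⊤) : μ s • μ[|s] = μ.restrict s := by
  rcases eq_or_ne (μ s) 0 with h0 | h0
  · rw [h0, zero_smul, Measure.restrict_eq_zero.2 h0]
  · rw [ProbabilityTheory.cond, smul_smul, ENNReal.mul_inv_cancel h0 hs, one_smul]

lemma sum_restrict_preimage_singleton {α ι κ : Type*} [MeasurableSpace α] [MeasurableSpace ι]
    [MeasurableSingletonClass ι] [Countable κ] {μ : Measure α} {f : α → ι} (hf : Measurable f)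
    {a : κ → ι} (ha : Injective a) (hμ : ∀ᵐ x ∂μ, f x ∈ range a) :
    Measure.sum (fun i => μ.restrict (f ⁻¹' {a i})) = μ := by
  rw [← Measure.restrict_iUnion (fun i j hij => (disjoint_singleton.2 (ha.ne hij)).preimage f)
    fun i => hf (measurableSet_singleton _)]
  refine Measure.restrict_eq_self_of_ae_mem ?_
  filter_upwards [hμ] with x ⟨i, hi⟩
  exact mem_iUnion.2 ⟨i, hi.symm⟩

section Coupling

variable {X Y : Type*} [MeasurableSpace X] [MeasurableSpace Y] {c : X × Y → ℝ≥0∞}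
  {μ : Measure X} {ν : Measure Y} {γ : Measure (X × Y)}

lemma IsCoupling.smul (hγ : IsCoupling μ ν γ) (a : ℝ≥0∞) :
    IsCoupling (a • μ) (a • ν) (a • γ) :=
  ⟨by rw [Measure.map_smul, hγ.1], by rw [Measure.map_smul, hγ.2]⟩

lemma IsCoupling.sum {κ : Type*} {μ : κ → Measure X} {ν : κ → Measure Y}
    {γ : κ → Measure (X × Y)} (hγ : ∀ i, IsCoupling (μ i) (ν i) (γ i)) :
    IsCoupling (Measure.sum μ) (Measure.sum ν) (Measure.sum γ) :=
  ⟨(Measure.map_sum measurable_fst.aemeasurable).trans (congrArg _ (funext fun i => (hγ i).1)),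
    (Measure.map_sum measurable_snd.aemeasurable).trans (congrArg _ (funext fun i => (hγ i).2))⟩

lemma IsCoupling.restrict_prod {s : Set X} {t : Set Y} (hγ : IsCoupling μ ν γ)
    (hs : MeasurableSet s) (ht : MeasurableSet t) (hst : γ (s ×ˢ tᶜ) = 0)
    (hts : γ (sᶜ ×ˢ t) = 0) :
    IsCoupling (μ.restrict s) (ν.restrict t) (γ.restrict (s ×ˢ t)) := by
  have hfst : s ×ˢ t =ᵐ[γ] Prod.fst ⁻¹' s := by
    refine ae_eq_set.2 ⟨?_, ?_⟩
    · rw [sdiff_eq_empty.2 fun p hp => hp.1, measure_empty]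
    · exact measure_mono_null (fun p (hp : p ∈ Prod.fst ⁻¹' s \ s ×ˢ t) =>
        (⟨hp.1, fun h => hp.2 ⟨hp.1, h⟩⟩ : p ∈ s ×ˢ tᶜ)) hst
  have hsnd : s ×ˢ t =ᵐ[γ] Prod.snd ⁻¹' t := by
    refine ae_eq_set.2 ⟨?_, ?_⟩
    · rw [sdiff_eq_empty.2 fun p hp => hp.2, measure_empty]
    · exact measure_mono_null (fun p (hp : p ∈ Prod.snd ⁻¹' t \ s ×ˢ t) =>
        (⟨fun h => hp.2 ⟨h, hp.1⟩, hp.1⟩ : p ∈ sᶜ ×ˢ t)) hts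
  constructor
  · rw [Measure.restrict_congr_set hfst, ← Measure.restrict_map measurable_fst hs, hγ.1]
  · rw [Measure.restrict_congr_set hsnd, ← Measure.restrict_map measurable_snd ht, hγ.2]

lemma MKCost_le_lintegral (hγ : IsCoupling μ ν γ) : MKCost c μ ν ≤ ∫⁻ p, c p ∂γ :=
  iInf₂_le γ hγ

lemma exists_isCoupling_lintegral_lt {r : ℝ≥0∞} (h : MKCost c μ ν < r) :
    ∃ γ, IsCoupling μ ν γ ∧ ∫⁻ p, c p ∂γ < r := by
  simpa [MKCost, iInf_lt_iff] using h

lemma MKCost_self_le (μ : Measure X) {c : X × X → ℝ≥0∞} :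
    MKCost c μ μ ≤ ∫⁻ x, c (x, x) ∂μ := by
  have hdiag : IsCoupling μ μ (μ.map fun x => (x, x)) := by
    constructor <;>
      rw [Measure.map_map (by fun_prop) (by fun_prop)] <;> exact Measure.map_id
  exact (MKCost_le_lintegral hdiag).trans (lintegral_map_le _ _)

lemma MKCost_smul {a : ℝ≥0∞} (ha : a ≠ ⊤) : MKCost c (a • μ) (a • ν) = a * MKCost c μ ν := by
  rcases eq_or_ne a 0 with rfl | ha0
  · refine le_antisymm ?_ (by rw [zero_mul]; exact zero_le)
    simpa using MKCost_le_lintegral (c := c) (IsCoupling.smul (γ := 0) ⟨rfl, rfl⟩ 0)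
  refine le_antisymm ?_ (le_iInf₂ fun γ hγ => ?_)
  · simp only [MKCost, ENNReal.mul_iInf_of_ne ha0 ha]
    refine le_iInf₂ fun γ hγ => ?_
    rw [← smul_eq_mul, ← lintegral_smul_measure]
    exact MKCost_le_lintegral (hγ.smul a)
  · have hγ' : IsCoupling μ ν (a⁻¹ • γ) := by
      simpa [smul_smul, ENNReal.inv_mul_cancel ha0 ha] using hγ.smul a⁻¹
    calc a * MKCost c μ ν ≤ a * ∫⁻ p, c p ∂(a⁻¹ • γ) := by gcongr; exact MKCost_le_lintegral hγ'
      _ = ∫⁻ p, c p ∂γ := by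
        rw [lintegral_smul_measure, smul_eq_mul, ← mul_assoc, ENNReal.mul_inv_cancel ha0 ha,
          one_mul]

lemma MKCost_restrict_eq_mul_cond {s : Set X} {t : Set Y} (hs : μ s ≠ ⊤) (hst : μ s = ν t) :
    MKCost c (μ.restrict s) (ν.restrict t) = MKCost c μ[|s] ν[|t] * μ s := by
  rw [← measure_smul_cond μ hs, ← measure_smul_cond ν (hst ▸ hs), ← hst, MKCost_smul hs, mul_comm]

lemma MKCost_sum_le {κ : Type*} [Countable κ] (μ : κ → Measure X) (ν : κ → Measure Y) :
    MKCost c (Measure.sum μ) (Measure.sum ν) ≤ ∑' i, MKCost c (μ i) (ν i) := by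
  refine ENNReal.le_of_forall_pos_le_add fun ε hε hfin => ?_
  obtain ⟨δ, hδ, hδε⟩ := ENNReal.exists_pos_sum_of_countable' (ENNReal.coe_ne_zero.2 hε.ne') κ
  have hnear (i : κ) :
      ∃ γ, IsCoupling (μ i) (ν i) γ ∧ ∫⁻ p, c p ∂γ < MKCost c (μ i) (ν i) + δ i :=
    exists_isCoupling_lintegral_lt <|
      ENNReal.lt_add_right (ne_top_of_le_ne_top hfin.ne (ENNReal.le_tsum i)) (hδ i).ne'
  choose γ hγ hcost using hnear
  calc MKCost c (Measure.sum μ) (Measure.sum ν) ≤ ∫⁻ p, c p ∂(Measure.sum γ) :=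
        MKCost_le_lintegral (IsCoupling.sum hγ)
    _ = ∑' i, ∫⁻ p, c p ∂(γ i) := lintegral_sum_measure _ _
    _ ≤ ∑' i, (MKCost c (μ i) (ν i) + δ i) := ENNReal.tsum_le_tsum fun i => (hcost i).le
    _ = ∑' i, MKCost c (μ i) (ν i) + ∑' i, δ i := ENNReal.tsum_add
    _ ≤ ∑' i, MKCost c (μ i) (ν i) + ε := by gcongr

variable {ι κ : Type*} [MeasurableSpace ι] [MeasurableSingletonClass ι] [Countable κ]
  {f : X → ι} {g : Y → ι} {a : κ → ι}

lemma tsum_MKCost_restrict_preimage_le_lintegral (hf : Measurable f) (hg : Measurable g)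
    (ha : Injective a) (hc : ∀ x y, f x ≠ g y → c (x, y) = ⊤) (hγ : IsCoupling μ ν γ) :
    ∑' i, MKCost c (μ.restrict (f ⁻¹' {a i})) (ν.restrict (g ⁻¹' {a i})) ≤ ∫⁻ p, c p ∂γ := by
  rcases eq_or_ne (∫⁻ p, c p ∂γ) ⊤ with htop | hfin
  · exact htop ▸ le_top
  have hA (i : κ) : MeasurableSet (f ⁻¹' {a i}) := hf (measurableSet_singleton _)
  have hB (i : κ) : MeasurableSet (g ⁻¹' {a i}) := hg (measurableSet_singleton _)
  -- Finite cost forces `γ` to pair points with the same label `f x = g y`.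
  have hcoup (i : κ) : IsCoupling (μ.restrict (f ⁻¹' {a i})) (ν.restrict (g ⁻¹' {a i}))
      (γ.restrict ((f ⁻¹' {a i}) ×ˢ (g ⁻¹' {a i}))) :=
    hγ.restrict_prod (hA i) (hB i)
      (measure_eq_zero_of_lintegral_ne_top ((hA i).prod (hB i).compl)
        (fun p hp => hc _ _ fun h => hp.2 (h.symm.trans hp.1)) hfin)
      (measure_eq_zero_of_lintegral_ne_top ((hA i).compl.prod (hB i))
        (fun p hp => hc _ _ fun h => hp.1 (h.trans hp.2)) hfin)
  have hdisj : Pairwise (Function.onFun Disjoint fun i => (f ⁻¹' {a i}) ×ˢ (g ⁻¹' {a i})) :=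
    fun i j hij => ((disjoint_singleton.2 (ha.ne hij)).preimage f).set_prod_left _ _
  calc ∑' i, MKCost c (μ.restrict (f ⁻¹' {a i})) (ν.restrict (g ⁻¹' {a i}))
      ≤ ∑' i, ∫⁻ p in (f ⁻¹' {a i}) ×ˢ (g ⁻¹' {a i}), c p ∂γ :=
        ENNReal.tsum_le_tsum fun i => MKCost_le_lintegral (hcoup i)
    _ = ∫⁻ p in ⋃ i, (f ⁻¹' {a i}) ×ˢ (g ⁻¹' {a i}), c p ∂γ :=
        (lintegral_iUnion (fun i => (hA i).prod (hB i)) hdisj _).symm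
    _ ≤ ∫⁻ p, c p ∂γ := setLIntegral_le_lintegral _ _

theorem MKCost_eq_tsum_MKCost_restrict_preimage (hf : Measurable f) (hg : Measurable g)
    (ha : Injective a) (hμ : ∀ᵐ x ∂μ, f x ∈ range a) (hν : ∀ᵐ y ∂ν, g y ∈ range a)
    (hc : ∀ x y, f x ≠ g y → c (x, y) = ⊤) :
    MKCost c μ ν = ∑' i, MKCost c (μ.restrict (f ⁻¹' {a i})) (ν.restrict (g ⁻¹' {a i})) := by
  refine le_antisymm ?_ (le_iInf₂ fun γ hγ =>
    tsum_MKCost_restrict_preimage_le_lintegral hf hg ha hc hγ)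
  conv_lhs => rw [← sum_restrict_preimage_singleton hf ha hμ,
    ← sum_restrict_preimage_singleton hg ha hν]
  exact MKCost_sum_le _ _

end Coupling

lemma IsConfiguration.measure_univ_mem_range_natCast {X : Type*} [MeasurableSpace X]
    {η : Measure X} (hη : IsConfiguration η) (hfin : η univ ≠ ⊤) :
    η univ ∈ range (Nat.cast : ℕ → ℝ≥0∞) := by
  obtain ⟨D, -, rfl⟩ := hη
  have hcard : (Measure.sum fun x : D => Measure.dirac (x : X)) univ = ENat.card D := by
    simp [Measure.sum_apply _ MeasurableSet.univ]
  obtain ⟨n, hn⟩ := (ENat.ne_top_iff_exists (n := ENat.card D)).1 fun h =>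
    hfin (by rw [hcard, h]; rfl)
  exact ⟨n, by rw [hcard, ← hn]; rfl⟩

lemma measurableSet_nPoints (k n : ℕ) : MeasurableSet (nPoints k n) :=
  Measure.measurable_coe MeasurableSet.univ (measurableSet_singleton _)

lemma preimage_measure_univ_natCast (k n : ℕ) :
    (fun η : Measure (EuclideanSpace ℝ (Fin k)) => η univ) ⁻¹' {(n : ℝ≥0∞)} = nPoints k n :=
  rfl

lemma configCost_eq_top {η ω : Measure (EuclideanSpace ℝ (Fin k))}
    (h : η univ ≠ ω univ) : configCost η ω = ⊤ := by
  refine top_le_iff.1 (le_iInf₂ fun β ⟨h₁, h₂, _⟩ => absurd ?_ h)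
  rw [← h₁, ← h₂, Measure.map_apply measurable_fst MeasurableSet.univ,
    Measure.map_apply measurable_snd MeasurableSet.univ, preimage_univ, preimage_univ]

lemma configCost_zero_zero : configCost (0 : Measure (EuclideanSpace ℝ (Fin k))) 0 = 0 := by
  have h0 : IsConfiguration (0 : Measure (EuclideanSpace ℝ (Fin k) × EuclideanSpace ℝ (Fin k))) :=
    ⟨∅, countable_empty, by simp⟩
  exact nonpos_iff_eq_zero.1
    ((iInf₂_le 0 ⟨by simp, by simp, h0⟩).trans_eq (lintegral_zero_measure _))

lemma MKCost_configCost_restrict_nPoints_zero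
    {μ ν : Measure (Measure (EuclideanSpace ℝ (Fin k)))} (h : μ (nPoints k 0) = ν (nPoints k 0)) :
    MKCost (fun p => configCost p.1 p.2) (μ.restrict (nPoints k 0)) (ν.restrict (nPoints k 0))
      = 0 := by
  have hzero : nPoints k 0 = {0} := by
    ext η
    simp [nPoints]
  have hμν : ν.restrict (nPoints k 0) = μ.restrict (nPoints k 0) := by
    rw [hzero] at h ⊢
    rw [Measure.restrict_singleton, Measure.restrict_singleton, h]
  rw [hμν]
  refine nonpos_iff_eq_zero.1 ((MKCost_self_le _).trans_eq ?_)
  rw [setLIntegral_congr_fun (g := fun _ => 0) (measurableSet_nPoints k 0) fun η hη => by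
    rw [hzero, mem_singleton_iff] at hη; rw [hη]; exact configCost_zero_zero, lintegral_zero]

theorem transport_cost_decomposition_general
    (Λ : Set (EuclideanSpace ℝ (Fin k)))
    (μ ν : Measure (Measure (EuclideanSpace ℝ (Fin k))))
    [IsProbabilityMeasure μ]
    (hμconf : ∀ᵐ η ∂μ, IsConfiguration η ∧ η Λᶜ = 0 ∧ η Set.univ ≠ ⊤)
    (hνconf : ∀ᵐ ω ∂ν, IsConfiguration ω ∧ ω Set.univ ≠ ⊤)
    (hcount : ∀ n : ℕ, μ (nPoints k n) = ν (nPoints k n)) :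
    MKCost (fun p => configCost p.1 p.2) μ ν =
      ∑' m : ℕ,
        MKCost (fun p => configCost p.1 p.2) (μ[|nPoints k (m + 1)]) (ν[|nPoints k (m + 1)]) *
          μ (nPoints k (m + 1)) := by
  have hμ : ∀ᵐ η ∂μ, η univ ∈ range (Nat.cast : ℕ → ℝ≥0∞) := by
    filter_upwards [hμconf] with η hη using hη.1.measure_univ_mem_range_natCast hη.2.2
  have hν : ∀ᵐ ω ∂ν, ω univ ∈ range (Nat.cast : ℕ → ℝ≥0∞) := by
    filter_upwards [hνconf] with ω hω using hω.1.measure_univ_mem_range_natCast hω.2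
  have hmass : Measurable fun η : Measure (EuclideanSpace ℝ (Fin k)) => η univ :=
    Measure.measurable_coe MeasurableSet.univ
  rw [MKCost_eq_tsum_MKCost_restrict_preimage hmass hmass Nat.cast_injective hμ hν
    fun η ω => configCost_eq_top]
  simp only [preimage_measure_univ_natCast]
  rw [tsum_eq_zero_add' ENNReal.summable, MKCost_configCost_restrict_nPoints_zero (hcount 0),
    zero_add]
  exact tsum_congr fun m => MKCost_restrict_eq_mul_cond (measure_ne_top μ _) (hcount (m + 1))

/-- Decomposition of the Monge–Kantorovitch cost between a regular finite point process on a
compact `Λ` and a finite point process `ν` with the same distribution of the number of points: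
`T_c(μ,ν)² = Σ_{n≥1} T_c(μₙ,νₙ)² μ(η(Λ)=n)`. -/
theorem transport_cost_decomposition
    (Λ : Set (EuclideanSpace ℝ (Fin k))) (hΛ : IsCompact Λ)
    (μ ν : Measure (Measure (EuclideanSpace ℝ (Fin k))))
    [IsProbabilityMeasure μ] [IsProbabilityMeasure ν]
    (hμconf : ∀ᵐ η ∂μ, IsConfiguration η ∧ η Λᶜ = 0 ∧ η Set.univ ≠ ⊤)
    (hνconf : ∀ᵐ ω ∂ν, IsConfiguration ω ∧ ω Set.univ ≠ ⊤)
    (hreg : IsRegularConfigMeasure μ)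
    (hcount : ∀ n : ℕ, μ (nPoints k n) = ν (nPoints k n))
    (hsum : ∑' m : ℕ,
        MKCost (fun p => configCost p.1 p.2) (μ[|nPoints k (m + 1)]) (ν[|nPoints k (m + 1)]) *
          μ (nPoints k (m + 1)) ≠ ⊤) :
    MKCost (fun p => configCost p.1 p.2) μ ν =
      ∑' m : ℕ,
        MKCost (fun p => configCost p.1 p.2) (μ[|nPoints k (m + 1)]) (ν[|nPoints k (m + 1)]) *
          μ (nPoints k (m + 1)) :=
  transport_cost_decomposition_general Λ μ ν hμconf hνconf hcount

end
end
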